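/- Symmetry identity (n = 2 case of Theorem 3): for all natural numbers m, positive integers w₁, w₂, real q with 0 < q < 1, and real x, the expression ∑_{l=0}^{m} C(m,l) [w₁]_q^{l-1} [w₂]_q^{m-l} β_{l,q^{w₁}}(w₂x) · T_{m,q^{w₂}}(w₁ | l) is symmetric under interchanging w₁ and w₂, where T_{m,r}(w | l) = ∑_{k=0}^{w-1} r^{(l+1)k} [k]_r^{m-l}. -/

import Mathlib

/-- The real `q`-analogue `[z]_r = (1 - r^z)/(1 - r)` using real powers. -/
noncomputable def qReal (r z : ℝ) : ℝ := (1 - r ^ z) / (1 - r)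

/-- The Carlitz `q`-Bernoulli polynomial
`β_{n,q}(x) = ∑_{l=0}^n C(n,l) q^{lx} [x]_q^{n-l} β_l` (real `x`, real powers),
built from a sequence `β` of `q`-Bernoulli numbers. -/
noncomputable def qBernoulliPoly (q : ℝ) (β : ℕ → ℝ) (n : ℕ) (x : ℝ) : ℝ :=
  ∑ l ∈ Finset.range (n + 1), (n.choose l : ℝ) * q ^ ((l : ℝ) * x) * (qReal q x) ^ (n - l) * β l

/-- The Carlitz recurrence: `β 0 = 1` and
`q·∑_{k=0}^{n} C(n,k) q^k β k − β n = δ_{n,1}` for `n ≥ 1`. -/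
def IsCarlitz (q : ℝ) (β : ℕ → ℝ) : Prop :=
  β 0 = 1 ∧ ∀ n : ℕ, 1 ≤ n →
    q * ∑ k ∈ Finset.range (n + 1), (n.choose k : ℝ) * q ^ k * β k - β n =
      if n = 1 then 1 else 0

/-- The sum `T_{m,r}(w | l) = ∑_{k=0}^{w-1} r^{(l+1)k} [k]_r^{m-l}`. -/
noncomputable def Tsum (m : ℕ) (r : ℝ) (w : ℕ) (l : ℕ) : ℝ :=
  ∑ k ∈ Finset.range w, r ^ ((l + 1) * k) * (qReal r (k : ℝ)) ^ (m - l)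

/-! Carlitz's recurrence determines `β` uniquely, and it is solved by the explicit formula
`β_{n,r} = (1 - r)^{1-n} ∑_i C(n,i) (-1)^i (i+1) / (1 - r^{i+1})`. Substituting it, the
`q`-Bernoulli polynomials and the sums `T` combine through the Bernstein identity
`∑_l C(m,l) u^l (1-u)^{m-l} ∑_i C(l,i) c_i = ∑_i C(m,i) u^i c_i`, and summing the resulting
geometric series over `k` turns the left-hand side into
`(1-q)^{1-m} ∑_i C(m,i) q^{w₁w₂xi} (-1)^i (i+1) (1 - q^{w₁w₂(i+1)}) / ((1 - q^{w₁(i+1)}) (1 - q^{w₂(i+1)}))`,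
which is visibly symmetric in `w₁` and `w₂`. -/

open Finset

section Binomial

variable {R : Type*} [CommRing R]

theorem sum_range_choose_mul_neg_one_pow_mul_succ (n : ℕ) :
    ∑ i ∈ range (n + 2), ((n + 1).choose i : R) * ((-1) ^ i * (i + 1)) =
      -if n = 0 then 1 else 0 := by
  have alternating :
      ∑ i ∈ range (n + 1), (n.choose i : R) * (-1) ^ i = if n = 0 then 1 else 0 := by
    have h := congrArg (Int.cast : ℤ → R) (Int.alternating_sum_range_choose (n := n))
    push_cast at h
    simpa only [mul_comm] using h
  rw [sum_choose_succ_mul (fun i _ => ((-1 : R) ^ i * (i + 1))) n, ← sum_add_distrib,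
    ← alternating, ← sum_neg_distrib]
  refine sum_congr rfl fun i _ => ?_
  push_cast
  ring

theorem sum_range_choose_mul_choose_mul_pow_mul_one_sub_pow (u : R) {m i : ℕ} (hi : i ≤ m) :
    ∑ l ∈ range (m + 1), (m.choose l : R) * l.choose i * u ^ l * (1 - u) ^ (m - l) =
      m.choose i * u ^ i := by
  obtain ⟨k, rfl⟩ := Nat.exists_eq_add_of_le hi
  rw [show i + k + 1 = i + (k + 1) by ring, sum_range_add,
    sum_eq_zero fun l hl => by simp [Nat.choose_eq_zero_of_lt (mem_range.1 hl)], zero_add]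
  have binomial : ∑ j ∈ range (k + 1), u ^ j * (1 - u) ^ (k - j) * k.choose j = 1 := by
    rw [← add_pow, add_sub_cancel, one_pow]
  calc ∑ j ∈ range (k + 1), ((i + k).choose (i + j) : R) * (i + j).choose i * u ^ (i + j) *
        (1 - u) ^ (i + k - (i + j))
      = ∑ j ∈ range (k + 1), ((i + k).choose i * u ^ i) *
          (u ^ j * (1 - u) ^ (k - j) * k.choose j) := by
        refine sum_congr rfl fun j hj => ?_
        have hjk : j ≤ k := Nat.lt_succ_iff.1 (mem_range.1 hj)
        have hchoose := Nat.choose_mul (n := i + k) (k := i + j) (s := i) (by omega)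
        rw [show i + k - i = k by omega, show i + j - i = j by omega] at hchoose
        rw [← Nat.cast_mul, hchoose, show i + k - (i + j) = k - j by omega]
        push_cast
        ring
    _ = _ := by rw [← mul_sum, binomial, mul_one]

theorem sum_bernstein_mul_sum_range_choose (u : R) (c : ℕ → R) (m : ℕ) :
    ∑ l ∈ range (m + 1), (m.choose l : R) * u ^ l * (1 - u) ^ (m - l) *
        ∑ i ∈ range (l + 1), (l.choose i : R) * c i =
      ∑ i ∈ range (m + 1), (m.choose i : R) * (u ^ i * c i) := by
  have extend : ∀ l ∈ range (m + 1), ∑ i ∈ range (l + 1), (l.choose i : R) * c i =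
      ∑ i ∈ range (m + 1), (l.choose i : R) * c i := fun l hl =>
    sum_subset (range_subset_range.2 (by simpa using hl)) fun i _ hi => by
      simp [Nat.choose_eq_zero_of_lt (not_lt.1 (mt mem_range.2 hi))]
  rw [sum_congr rfl fun l hl => by rw [extend l hl, mul_sum], sum_comm]
  refine sum_congr rfl fun i hi => ?_
  rw [← mul_assoc, ← sum_range_choose_mul_choose_mul_pow_mul_one_sub_pow u
    (Nat.lt_succ_iff.1 (mem_range.1 hi)), sum_mul]
  exact sum_congr rfl fun l _ => by ring

end Binomial

theorem qReal_natCast (r : ℝ) (n : ℕ) : qReal r n = (1 - r ^ n) / (1 - r) := by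
  rw [qReal, Real.rpow_natCast]

theorem one_sub_pow_ne_zero {r : ℝ} (h0 : 0 < r) (h1 : r < 1) {n : ℕ} (hn : n ≠ 0) :
    1 - r ^ n ≠ 0 :=
  (sub_pos.2 (pow_lt_one₀ h0.le h1 hn)).ne'

theorem qBernoulliPoly_one {r : ℝ} (hr : r ≠ 1) (β : ℕ → ℝ) (n : ℕ) :
    qBernoulliPoly r β n 1 = ∑ k ∈ range (n + 1), (n.choose k : ℝ) * r ^ k * β k := by
  have hq : qReal r 1 = 1 := by rw [qReal, Real.rpow_one, div_self (sub_ne_zero.2 hr.symm)]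
  simp only [qBernoulliPoly, mul_one, Real.rpow_natCast, hq, one_pow]

noncomputable def carlitzCoeff (r : ℝ) (i : ℕ) : ℝ := (-1) ^ i * (i + 1) / (1 - r ^ (i + 1))

noncomputable def carlitzBernoulli (r : ℝ) (n : ℕ) : ℝ :=
  (1 - r) / (1 - r) ^ n * ∑ i ∈ range (n + 1), (n.choose i : ℝ) * carlitzCoeff r i

theorem qBernoulliPoly_carlitzBernoulli {r : ℝ} (h0 : 0 < r) (h1 : r < 1) (n : ℕ) (x : ℝ) :
    qBernoulliPoly r (carlitzBernoulli r) n x =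
      (1 - r) / (1 - r) ^ n * ∑ i ∈ range (n + 1),
        (n.choose i : ℝ) * ((r ^ x) ^ i * carlitzCoeff r i) := by
  have hr : 1 - r ≠ 0 := by linarith
  rw [qBernoulliPoly, ← sum_bernstein_mul_sum_range_choose, mul_sum]
  refine sum_congr rfl fun l hl => ?_
  have hpow : (1 - r) ^ n = (1 - r) ^ (n - l) * (1 - r) ^ l := by
    rw [← pow_add, Nat.sub_add_cancel (Nat.lt_succ_iff.1 (mem_range.1 hl))]
  rw [mul_comm (l : ℝ) x, Real.rpow_mul_natCast h0.le, qReal, carlitzBernoulli, hpow, div_pow]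
  field_simp

theorem isCarlitz_carlitzBernoulli {r : ℝ} (h0 : 0 < r) (h1 : r < 1) :
    IsCarlitz r (carlitzBernoulli r) := by
  have hr : 1 - r ≠ 0 := by linarith
  refine ⟨by simp [carlitzBernoulli, carlitzCoeff, hr], fun n hn => ?_⟩
  obtain ⟨n, rfl⟩ := Nat.exists_eq_add_of_le' hn
  rw [← qBernoulliPoly_one h1.ne, qBernoulliPoly_carlitzBernoulli h0 h1, carlitzBernoulli,
    Real.rpow_one, mul_left_comm, ← mul_sub, mul_sum, ← sum_sub_distrib]
  have hterm : ∀ i ∈ range (n + 2),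
      r * (((n + 1).choose i : ℝ) * (r ^ i * carlitzCoeff r i)) -
        ((n + 1).choose i : ℝ) * carlitzCoeff r i =
      -(((n + 1).choose i : ℝ) * ((-1) ^ i * (i + 1))) := fun i _ => by
    rw [carlitzCoeff]
    field_simp [one_sub_pow_ne_zero h0 h1 i.succ_ne_zero]
    ring
  rw [sum_congr rfl hterm, sum_neg_distrib, sum_range_choose_mul_neg_one_pow_mul_succ]
  rcases eq_or_ne n 0 with rfl | hn0
  · simp [hr]
  · simp [hn0]

theorem IsCarlitz.unique {r : ℝ} (h0 : 0 < r) (h1 : r < 1) {β γ : ℕ → ℝ}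
    (hβ : IsCarlitz r β) (hγ : IsCarlitz r γ) : β = γ := by
  funext n
  induction n using Nat.strong_induction_on with
  | _ n ih =>
    obtain _ | n := n
    · rw [hβ.1, hγ.1]
    have hsplit : ∀ δ : ℕ → ℝ,
        r * ∑ k ∈ range (n + 2), ((n + 1).choose k : ℝ) * r ^ k * δ k - δ (n + 1) =
          r * ∑ k ∈ range (n + 1), ((n + 1).choose k : ℝ) * r ^ k * δ k +
            (r ^ (n + 2) - 1) * δ (n + 1) := by
      intro δ
      rw [sum_range_succ, Nat.choose_self]
      ring
    have hlower : ∑ k ∈ range (n + 1), ((n + 1).choose k : ℝ) * r ^ k * β k =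
        ∑ k ∈ range (n + 1), ((n + 1).choose k : ℝ) * r ^ k * γ k :=
      sum_congr rfl fun k hk => by rw [ih k (mem_range.1 hk)]
    have hrec := (hβ.2 (n + 1) n.succ_pos).trans (hγ.2 (n + 1) n.succ_pos).symm
    rw [hsplit, hsplit, hlower, add_right_inj] at hrec
    have hne : r ^ (n + 2) - 1 ≠ 0 := by
      rw [← neg_ne_zero, neg_sub]
      exact one_sub_pow_ne_zero h0 h1 (n + 1).succ_ne_zero
    exact mul_left_cancel₀ hne hrec

noncomputable def symmetricClosedForm (q : ℝ) (m w₁ w₂ : ℕ) (x : ℝ) : ℝ :=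
  (1 - q) / (1 - q) ^ m * ∑ i ∈ range (m + 1),
    (m.choose i : ℝ) * (q ^ ((w₁ * w₂ : ℝ) * x)) ^ i *
      ((-1) ^ i * (i + 1) * (1 - q ^ (w₁ * w₂ * (i + 1))) /
        ((1 - q ^ (w₁ * (i + 1))) * (1 - q ^ (w₂ * (i + 1)))))

theorem symmetricClosedForm_comm (q : ℝ) (m w₁ w₂ : ℕ) (x : ℝ) :
    symmetricClosedForm q m w₁ w₂ x = symmetricClosedForm q m w₂ w₁ x := by
  simp only [symmetricClosedForm, mul_comm (w₁ : ℝ), mul_comm w₁ w₂,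
    mul_comm (1 - q ^ (w₁ * _)) (1 - q ^ (w₂ * _))]

theorem Tsum_eq_sum_pow (m : ℕ) (r : ℝ) (w l : ℕ) :
    Tsum m r w l = ∑ k ∈ range w, r ^ k * (r ^ k) ^ l * ((1 - r ^ k) / (1 - r)) ^ (m - l) := by
  refine sum_congr rfl fun k _ => ?_
  rw [qReal_natCast, mul_comm (l + 1), pow_mul, pow_succ, mul_comm ((r ^ k) ^ l)]

theorem geom_sum_pow_pow_eq {q : ℝ} {a b : ℕ} (h : 1 - q ^ (b * a) ≠ 0) (n : ℕ) :
    ∑ k ∈ range n, ((q ^ b) ^ a) ^ k = (1 - q ^ (n * b * a)) / (1 - q ^ (b * a)) := by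
  rw [← pow_mul, geom_sum_eq, ← pow_mul, ← neg_div_neg_eq, neg_sub, neg_sub,
    show n * b * a = b * a * n by ring]
  exact fun h' => h (by rw [h', sub_self])

section Symmetry

variable {q : ℝ} {w₁ w₂ : ℕ}

theorem qReal_zpow_mul_qReal_pow_mul_Tsum (hq0 : 0 < q) (hq1 : q < 1) (hw₁ : 0 < w₁)
    (hw₂ : 0 < w₂) {m l : ℕ} (hl : l ≤ m) (P : ℝ) :
    (m.choose l : ℝ) * qReal q w₁ ^ ((l : ℤ) - 1) * qReal q w₂ ^ (m - l) *
        ((1 - q ^ w₁) / (1 - q ^ w₁) ^ l * P) * Tsum m (q ^ w₂) w₁ l =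
      (1 - q) / (1 - q) ^ m * ∑ k ∈ range w₁, (q ^ w₂) ^ k *
        ((m.choose l : ℝ) * ((q ^ w₂) ^ k) ^ l * (1 - (q ^ w₂) ^ k) ^ (m - l) * P) := by
  have hq : 1 - q ≠ 0 := by linarith
  have ha : 1 - q ^ w₁ ≠ 0 := one_sub_pow_ne_zero hq0 hq1 hw₁.ne'
  have hb : 1 - q ^ w₂ ≠ 0 := one_sub_pow_ne_zero hq0 hq1 hw₂.ne'
  have hpow : (1 - q) ^ m = (1 - q) ^ l * (1 - q) ^ (m - l) := by
    rw [← pow_add, Nat.add_sub_cancel' hl]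
  rw [qReal_natCast, qReal_natCast, zpow_sub₀ (div_ne_zero ha hq), zpow_natCast, zpow_one,
    Tsum_eq_sum_pow, mul_sum, mul_sum]
  refine sum_congr rfl fun k _ => ?_
  rw [hpow, div_pow, div_pow, div_pow]
  field_simp

theorem sum_qBernoulliPoly_mul_Tsum_eq_symmetricClosedForm (hq0 : 0 < q) (hq1 : q < 1)
    (hw₁ : 0 < w₁) (hw₂ : 0 < w₂) (m : ℕ) (x : ℝ) :
    ∑ l ∈ range (m + 1), (m.choose l : ℝ) * qReal q w₁ ^ ((l : ℤ) - 1) *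
        qReal q w₂ ^ (m - l) * qBernoulliPoly (q ^ w₁) (carlitzBernoulli (q ^ w₁)) l (w₂ * x) *
          Tsum m (q ^ w₂) w₁ l =
      symmetricClosedForm q m w₁ w₂ x := by
  have hv : (q ^ w₁) ^ ((w₂ : ℝ) * x) = q ^ ((w₁ * w₂ : ℝ) * x) := by
    rw [← Real.rpow_natCast, ← Real.rpow_mul hq0.le, mul_assoc]
  simp_rw [qBernoulliPoly_carlitzBernoulli (pow_pos hq0 w₁) (pow_lt_one₀ hq0.le hq1 hw₁.ne'),
    hv]
  rw [sum_congr rfl fun l hl => qReal_zpow_mul_qReal_pow_mul_Tsum hq0 hq1 hw₁ hw₂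
      (Nat.lt_succ_iff.1 (mem_range.1 hl)) _, ← mul_sum, sum_comm, symmetricClosedForm]
  congr 1
  simp_rw [← mul_sum, sum_bernstein_mul_sum_range_choose, mul_sum]
  rw [sum_comm]
  refine sum_congr rfl fun i _ => ?_
  have hi : ∀ w : ℕ, 0 < w → 1 - q ^ (w * (i + 1)) ≠ 0 := fun w hw =>
    one_sub_pow_ne_zero hq0 hq1 (Nat.mul_pos hw i.succ_pos).ne'
  calc ∑ k ∈ range w₁, (q ^ w₂) ^ k * ((m.choose i : ℝ) * (((q ^ w₂) ^ k) ^ i *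
        ((q ^ ((w₁ * w₂ : ℝ) * x)) ^ i * carlitzCoeff (q ^ w₁) i)))
      = (m.choose i : ℝ) * (q ^ ((w₁ * w₂ : ℝ) * x)) ^ i * carlitzCoeff (q ^ w₁) i *
          ∑ k ∈ range w₁, ((q ^ w₂) ^ (i + 1)) ^ k := by
        rw [mul_sum]
        refine sum_congr rfl fun k _ => ?_
        ring
    _ = _ := by
        rw [geom_sum_pow_pow_eq (hi w₂ hw₂), carlitzCoeff, ← pow_mul]
        field_simp [hi w₁ hw₁, hi w₂ hw₂]

end Symmetry

theorem qBernoulli_symmetry_T (m : ℕ) (w₁ w₂ : ℕ) (hw₁ : 0 < w₁) (hw₂ : 0 < w₂)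
    (q : ℝ) (hq0 : 0 < q) (hq1 : q < 1) (x : ℝ)
    (β : ℝ → ℕ → ℝ) (hβ : ∀ r : ℝ, 0 < r → r < 1 → IsCarlitz r (β r)) :
    (∑ l ∈ Finset.range (m + 1),
        (m.choose l : ℝ) * (qReal q (w₁ : ℝ)) ^ ((l : ℤ) - 1) *
          (qReal q (w₂ : ℝ)) ^ (m - l) *
            qBernoulliPoly (q ^ w₁) (β (q ^ w₁)) l ((w₂ : ℝ) * x) *
              Tsum m (q ^ w₂) w₁ l) =
      ∑ l ∈ Finset.range (m + 1),
        (m.choose l : ℝ) * (qReal q (w₂ : ℝ)) ^ ((l : ℤ) - 1) *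
          (qReal q (w₁ : ℝ)) ^ (m - l) *
            qBernoulliPoly (q ^ w₂) (β (q ^ w₂)) l ((w₁ : ℝ) * x) *
              Tsum m (q ^ w₁) w₂ l := by
  have hβ_eq : ∀ w : ℕ, 0 < w → β (q ^ w) = carlitzBernoulli (q ^ w) := fun w hw =>
    have h0 := pow_pos hq0 w
    have h1 := pow_lt_one₀ hq0.le hq1 hw.ne'
    (hβ _ h0 h1).unique h0 h1 (isCarlitz_carlitzBernoulli h0 h1)
  rw [hβ_eq w₁ hw₁, hβ_eq w₂ hw₂,
    sum_qBernoulliPoly_mul_Tsum_eq_symmetricClosedForm hq0 hq1 hw₁ hw₂,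
    sum_qBernoulliPoly_mul_Tsum_eq_symmetricClosedForm hq0 hq1 hw₂ hw₁,
    symmetricClosedForm_comm]
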